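/- arXiv:2305.13537 — 2 statements merged into one kernel-verified Lean document; each statement's English description precedes it below -/
import Mathlib

section
/- Assume conditions (⋆) and (⋆⋆) of Proposition 3 and that 1̄ = 1. If (1, b) ∈ C₁ for every b ∈ B, then the parallel pair (m∘φ, m∘θ) : C₂ ⇉ C₁ is bi-exact in the category of types; concretely, the commutative square with d(x, b) = b, c(x, b) = g(x, b) (note m∘φ(y, x, b) = (y, g(x, b)) and m∘θ(y, x, b) = (x, b), so c∘(m∘θ) = d∘(m∘φ)) is both a pullback and a pushout square of types, and the set-theoretic pullback C₃ of the span (m∘φ, m∘θ) with its two projections forms a square which is both a pullback and a pushout. -/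
universe u

section Link

variable {X B : Type u}

/-- The subset `C₁ = {(x, b) : f(x, b, 1, 0) = x = f(1, 0, x, b)}`. -/
def linkC1 (f : X → B → X → B → X) (one : X) (zero : B) : Set (X × B) :=
  {p | f p.1 p.2 one zero = p.1 ∧ f one zero p.1 p.2 = p.1}

/-- The subset `C₂ = {(y, x, b) : (y, g(x, b)) ∈ C₁ and (x, b) ∈ C₁}`. -/
def linkC2 (f : X → B → X → B → X) (g : X → B → B) (one : X) (zero : B) :
    Set (X × X × B) :=
  {t | ((t.1, g t.2.1 t.2.2) : X × B) ∈ linkC1 f one zero ∧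
    ((t.2.1, t.2.2) : X × B) ∈ linkC1 f one zero}

/-- `m(y, x, b) = (y·x, b)`. -/
def linkM (mul : X → X → X) : X × X × B → X × B :=
  fun t => (mul t.1 t.2.1, t.2.2)

/-- `θ(y, x, b) = (ȳ, y·x, b)`. -/
def linkθ (mul : X → X → X) (bar : X → X) : X × X × B → X × X × B :=
  fun t => (bar t.1, mul t.1 t.2.1, t.2.2)

/-- `φ(y, x, b) = (y·x, x̄, g(ȳ·(y·x), b))`. -/
def linkφ (mul : X → X → X) (bar : X → X) (g : X → B → B) :
    X × X × B → X × X × B :=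
  fun t => (mul t.1 t.2.1, bar t.2.1, g (mul (bar t.1) (mul t.1 t.2.1)) t.2.2)

section Closure

variable (mul : X → X → X) (one : X) (zero : B) (bar : X → X)
  (f : X → B → X → B → X) (g : X → B → B)

/-- Proposition 2 (well-definedness of `m`): if `(y, x, b) ∈ C₂` then
`(y·x, b) ∈ C₁`. -/
theorem linkM_mem
    (hf : ∀ y x b y' x' b', f (mul y x) b (mul y' x') b' =
      mul (f y (g x b) y' (g x' b')) (f x b x' b'))
    (hg10 : g one zero = zero) (h11 : mul one one = one) :
    ∀ t ∈ linkC2 f g one zero, linkM mul t ∈ linkC1 f one zero := by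
  rintro ⟨y, x, b⟩ ⟨⟨h1a, h1b⟩, h2a, h2b⟩
  constructor
  · show f (mul y x) b one zero = mul y x
    calc f (mul y x) b one zero = f (mul y x) b (mul one one) zero := by rw [h11]
      _ = mul (f y (g x b) one (g one zero)) (f x b one zero) := hf ..
      _ = mul y x := by rw [hg10, h1a, h2a]
  · show f one zero (mul y x) b = mul y x
    calc f one zero (mul y x) b = f (mul one one) zero (mul y x) b := by rw [h11]
      _ = mul (f one (g one zero) y (g x b)) (f one zero x b) := hf ..
      _ = mul y x := by rw [hg10, h1b, h2b]

/-- Closure of `C₂` under `θ`. -/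
theorem linkθ_mem
    (hf : ∀ y x b y' x' b', f (mul y x) b (mul y' x') b' =
      mul (f y (g x b) y' (g x' b')) (f x b x' b'))
    (hg : ∀ y x b, g (mul y x) b = g y (g x b))
    (hg10 : g one zero = zero) (h11 : mul one one = one)
    (hstar : ∀ x b, ((x, b) : X × B) ∈ linkC1 f one zero →
      ((bar x, g x b) : X × B) ∈ linkC1 f one zero) :
    ∀ t ∈ linkC2 f g one zero, linkθ mul bar t ∈ linkC2 f g one zero := by
  rintro ⟨y, x, b⟩ ht
  constructor
  · show ((bar y, g (mul y x) b) : X × B) ∈ linkC1 f one zero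
    rw [hg]
    exact hstar y (g x b) ht.1
  · exact linkM_mem mul one zero f g hf hg10 h11 _ ht

/-- Closure of `C₂` under `φ`. -/
theorem linkφ_mem
    (hf : ∀ y x b y' x' b', f (mul y x) b (mul y' x') b' =
      mul (f y (g x b) y' (g x' b')) (f x b x' b'))
    (hg : ∀ y x b, g (mul y x) b = g y (g x b))
    (hg10 : g one zero = zero) (h11 : mul one one = one)
    (hiv' : ∀ x b, g (mul (bar x) x) b = b)
    (hstar : ∀ x b, ((x, b) : X × B) ∈ linkC1 f one zero →
      ((bar x, g x b) : X × B) ∈ linkC1 f one zero)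
    (hcancel : ∀ t ∈ linkC2 f g one zero, mul (bar t.1) (mul t.1 t.2.1) = t.2.1) :
    ∀ t ∈ linkC2 f g one zero, linkφ mul bar g t ∈ linkC2 f g one zero := by
  rintro ⟨y, x, b⟩ ht
  have hx : mul (bar y) (mul y x) = x := hcancel _ ht
  constructor
  · show ((mul y x, g (bar x) (g (mul (bar y) (mul y x)) b)) : X × B) ∈
      linkC1 f one zero
    rw [hx, ← hg, hiv']
    exact linkM_mem mul one zero f g hf hg10 h11 _ ht
  · show ((bar x, g (mul (bar y) (mul y x)) b) : X × B) ∈ linkC1 f one zero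
    rw [hx]
    exact hstar x b ht.2

end Closure

/-- `m` as a map `C₂ → C₁`, given the closure property. -/
def linkMS {f : X → B → X → B → X} {g : X → B → B} {one : X} {zero : B}
    (mul : X → X → X)
    (hm : ∀ t ∈ linkC2 f g one zero, linkM mul t ∈ linkC1 f one zero) :
    linkC2 f g one zero → linkC1 f one zero :=
  fun t => ⟨linkM mul t.1, hm t.1 t.2⟩

/-- `θ` as a map `C₂ → C₂`, given the closure property. -/
def linkθS {f : X → B → X → B → X} {g : X → B → B} {one : X} {zero : B}
    (mul : X → X → X) (bar : X → X)
    (hθ : ∀ t ∈ linkC2 f g one zero, linkθ mul bar t ∈ linkC2 f g one zero) :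
    linkC2 f g one zero → linkC2 f g one zero :=
  fun t => ⟨linkθ mul bar t.1, hθ t.1 t.2⟩

/-- `φ` as a map `C₂ → C₂`, given the closure property. -/
def linkφS {f : X → B → X → B → X} {g : X → B → B} {one : X} {zero : B}
    (mul : X → X → X) (bar : X → X)
    (hφ : ∀ t ∈ linkC2 f g one zero, linkφ mul bar g t ∈ linkC2 f g one zero) :
    linkC2 f g one zero → linkC2 f g one zero :=
  fun t => ⟨linkφ mul bar g t.1, hφ t.1 t.2⟩

end Link

open CategoryTheory in
/-- A commutative square of types which is both a pullback and a pushout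
(an exact / bicartesian / Dolittle / pulation square). -/
def Bicartesian {P X Y Z : Type u} (fst : P → X) (snd : P → Y)
    (f : X → Z) (g : Y → Z) : Prop :=
  CategoryTheory.IsPullback (C := Type u) (TypeCat.ofHom fst) (TypeCat.ofHom snd)
      (TypeCat.ofHom f) (TypeCat.ofHom g) ∧
    CategoryTheory.IsPushout (C := Type u) (TypeCat.ofHom fst) (TypeCat.ofHom snd)
      (TypeCat.ofHom f) (TypeCat.ofHom g)

/-- A pair of parallel maps is *jointly monomorphic*. -/
def JointlyMono {A B C : Type u} (f : A → B) (g : A → C) : Prop :=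
  ∀ a a', f a = f a' → g a = g a' → a = a'

/-- An involutive-2-link `(θ, φ, m)` is *unital* (Definition 1(1)). -/
def IsUnitalLink {C₂ C₁ : Type u} (θ φ : C₂ → C₂) (m : C₂ → C₁) : Prop :=
  JointlyMono m (m ∘ θ) ∧ JointlyMono m (m ∘ φ) ∧
  ∃ e₁ e₂ : C₁ → C₂,
    m ∘ e₁ = id ∧ m ∘ e₂ = id ∧
    θ ∘ e₂ = e₂ ∧ φ ∘ e₁ = e₁ ∧
    m ∘ θ ∘ φ ∘ e₂ = m ∘ φ ∘ θ ∘ e₁ ∧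
    (m ∘ θ ∘ e₁) ∘ (m ∘ φ) = (m ∘ φ ∘ e₂) ∘ (m ∘ θ) ∧
    (m ∘ θ ∘ e₁) ∘ m = (m ∘ θ ∘ e₁) ∘ (m ∘ θ) ∧
    (m ∘ φ ∘ e₂) ∘ m = (m ∘ φ ∘ e₂) ∘ (m ∘ φ)

/-- An involutive-2-link `(θ, φ, m)` is *associative* (Definition 1(2)). -/
def IsAssociativeLink {C₂ C₁ : Type u} (θ φ : C₂ → C₂) (m : C₂ → C₁) : Prop :=
  ∃ (C₀ : Type u) (d c : C₁ → C₀) (C₃ : Type u) (p₁ p₂ : C₃ → C₂),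
    Bicartesian (m ∘ φ) (m ∘ θ) d c ∧
    Bicartesian p₂ p₁ (m ∘ φ) (m ∘ θ) ∧
    ∃ m₁ m₂ : C₃ → C₂,
      (m ∘ φ) ∘ m₁ = m ∘ p₁ ∧ (m ∘ θ) ∘ m₁ = (m ∘ θ) ∘ p₂ ∧
      (m ∘ φ) ∘ m₂ = (m ∘ φ) ∘ p₁ ∧ (m ∘ θ) ∘ m₂ = m ∘ p₂ ∧
      m ∘ m₁ = m ∘ m₂

/-- The set-theoretic pullback `C₃` of the parallel pair `(π₁, π₂)`
(the object of composable triples). -/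
def linkC3 {A C : Type u} (π₁ π₂ : A → C) : Type u :=
  {q : A × A // π₁ q.2 = π₂ q.1}

/-- First projection `p₁ : C₃ → C₂`. -/
def linkP1 {A C : Type u} (π₁ π₂ : A → C) : linkC3 π₁ π₂ → A := fun q => q.1.1

/-- Second projection `p₂ : C₃ → C₂`. -/
def linkP2 {A C : Type u} (π₁ π₂ : A → C) : linkC3 π₁ π₂ → A := fun q => q.1.2

/-!
By (⋆⋆) the two faces are `m∘φ (y, x, b) = (y, g(x, b))` and `m∘θ (y, x, b) = (x, b)`, so `C₂` is
literally the fibre product of `d` and `c`. Since `g(1, b) = g(1̄·1, b) = b`, the unit splits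
everything in sight: `(x, b) ↦ (x, 1, b)` and `(x, b) ↦ (1, x, b)` are sections of the two faces,
and `b ↦ (1, b)` is a section of both `d` and `c`. So both squares are pullbacks of surjections in
`Type`, and such a pullback is also a pushout: a cocone `(u, v)` descends along `b`, because any
two `b`-preimages of a point are joined through the pullback to a common `r`-preimage of it.
-/

namespace CategoryTheory.Limits.Types

variable {X₁ X₂ X₃ X₄ : Type u} {t : X₁ ⟶ X₂} {l : X₁ ⟶ X₃} {r : X₂ ⟶ X₄} {b : X₃ ⟶ X₄}

lemma PushoutCocone.inl_eq_inr_of_isPullback (h : IsPullback t l r b) (s : PushoutCocone t l)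
    {x₂ : X₂} {x₃ : X₃} (hx : r x₂ = b x₃) : s.inl x₂ = s.inr x₃ := by
  obtain ⟨x₁, rfl, rfl⟩ := exists_of_isPullback h x₂ x₃ hx
  exact ConcreteCategory.congr_hom s.condition x₁

lemma isPushout_of_isPullback_of_surjective (h : IsPullback t l r b)
    (hr : Function.Surjective r) (hb : Function.Surjective b) : IsPushout t l r b := by
  refine IsPushout.of_isColimit (PushoutCocone.IsColimit.mk h.w
    (fun s => ↾fun x₄ => s.inr (Function.surjInv hb x₄)) ?_ ?_ ?_)
  · intro s
    ext x₂
    exact (PushoutCocone.inl_eq_inr_of_isPullback h s (Function.surjInv_eq hb _).symm).symm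
  · intro s
    ext x₃
    obtain ⟨x₂, hx₂⟩ := hr (b x₃)
    change s.inr (Function.surjInv hb (b x₃)) = s.inr x₃
    rw [← PushoutCocone.inl_eq_inr_of_isPullback h s hx₂,
      PushoutCocone.inl_eq_inr_of_isPullback h s (hx₂.trans (Function.surjInv_eq hb _).symm)]
  · intro s m _ hm
    ext x₄
    calc m x₄ = m (b (Function.surjInv hb x₄)) := by rw [Function.surjInv_eq hb]
      _ = s.inr (Function.surjInv hb x₄) := ConcreteCategory.congr_hom hm _

end CategoryTheory.Limits.Types

theorem bicartesian_of_surjective {P X Y Z : Type u} {fst : P → X} {snd : P → Y}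
    {f : X → Z} {g : Y → Z} (comm : ∀ p, f (fst p) = g (snd p))
    (inj : ∀ p p', fst p = fst p' → snd p = snd p' → p = p')
    (lift : ∀ x y, f x = g y → ∃ p, fst p = x ∧ snd p = y)
    (hf : Function.Surjective f) (hg : Function.Surjective g) :
    Bicartesian fst snd f g := by
  have hpb : CategoryTheory.IsPullback (C := Type u) (TypeCat.ofHom fst) (TypeCat.ofHom snd)
      (TypeCat.ofHom f) (TypeCat.ofHom g) :=
    (CategoryTheory.Limits.Types.isPullback_iff _ _ _ _).2
      ⟨by ext p; exact comm p, fun p p' h => inj p p' h.1 h.2, lift⟩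
  exact ⟨hpb, CategoryTheory.Limits.Types.isPushout_of_isPullback_of_surjective hpb hf hg⟩

theorem bicartesian_linkC3 {A C : Type u} {π₁ π₂ : A → C}
    (h₁ : Function.Surjective π₁) (h₂ : Function.Surjective π₂) :
    Bicartesian (linkP2 π₁ π₂) (linkP1 π₁ π₂) π₁ π₂ :=
  bicartesian_of_surjective (fun q => q.2)
    (fun _ _ h₂ h₁ => Subtype.ext (Prod.ext h₁ h₂))
    (fun x y h => ⟨⟨(y, x), h⟩, rfl, rfl⟩) h₁ h₂

section LinkSquares

variable {X B : Type u} {one : X} {zero : B} {f : X → B → X → B → X} {g : X → B → B}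

theorem linkMS_linkφS_coe {mul : X → X → X} {bar : X → X}
    (hm : ∀ t ∈ linkC2 f g one zero, linkM mul t ∈ linkC1 f one zero)
    (hφc : ∀ t ∈ linkC2 f g one zero, linkφ mul bar g t ∈ linkC2 f g one zero)
    (hcancel : ∀ t ∈ linkC2 f g one zero, mul (bar t.1) (mul t.1 t.2.1) = t.2.1)
    (hcancel' : ∀ t ∈ linkC2 f g one zero, mul (mul t.1 t.2.1) (bar t.2.1) = t.1)
    (t : linkC2 f g one zero) :
    (linkMS mul hm (linkφS mul bar hφc t) : X × B) = (t.1.1, g t.1.2.1 t.1.2.2) := by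
  change (mul (mul _ _) (bar _), g (mul (bar _) (mul _ _)) _) = _
  rw [hcancel' _ t.2, hcancel _ t.2]

theorem linkMS_linkθS_coe {mul : X → X → X} {bar : X → X}
    (hm : ∀ t ∈ linkC2 f g one zero, linkM mul t ∈ linkC1 f one zero)
    (hθc : ∀ t ∈ linkC2 f g one zero, linkθ mul bar t ∈ linkC2 f g one zero)
    (hcancel : ∀ t ∈ linkC2 f g one zero, mul (bar t.1) (mul t.1 t.2.1) = t.2.1)
    (t : linkC2 f g one zero) :
    (linkMS mul hm (linkθS mul bar hθc t) : X × B) = (t.1.2.1, t.1.2.2) := by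
  change (mul (bar _) (mul _ _), t.1.2.2) = _
  rw [hcancel _ t.2]

variable {π₁ π₂ : linkC2 f g one zero → linkC1 f one zero}

theorem surjective_of_coe_eq_left (h1b : ∀ b, ((one, b) : X × B) ∈ linkC1 f one zero)
    (hg1 : ∀ b, g one b = b)
    (hπ₁ : ∀ t, (π₁ t : X × B) = (t.1.1, g t.1.2.1 t.1.2.2)) : Function.Surjective π₁ := by
  rintro ⟨⟨x, b⟩, hp⟩
  have ht : ((x, one, b) : X × X × B) ∈ linkC2 f g one zero := ⟨by rwa [hg1], h1b b⟩
  exact ⟨⟨_, ht⟩, Subtype.ext ((hπ₁ _).trans (by rw [hg1]))⟩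

theorem surjective_of_coe_eq_right (h1b : ∀ b, ((one, b) : X × B) ∈ linkC1 f one zero)
    (hπ₂ : ∀ t, (π₂ t : X × B) = (t.1.2.1, t.1.2.2)) : Function.Surjective π₂ := by
  rintro ⟨⟨x, b⟩, hp⟩
  exact ⟨⟨(one, x, b), h1b _, hp⟩, Subtype.ext (hπ₂ _)⟩

theorem bicartesian_linkC2 (h1b : ∀ b, ((one, b) : X × B) ∈ linkC1 f one zero)
    (hg1 : ∀ b, g one b = b)
    (hπ₁ : ∀ t, (π₁ t : X × B) = (t.1.1, g t.1.2.1 t.1.2.2))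
    (hπ₂ : ∀ t, (π₂ t : X × B) = (t.1.2.1, t.1.2.2)) :
    Bicartesian π₁ π₂ (fun p => (p : X × B).2) (fun p => g (p : X × B).1 (p : X × B).2) := by
  refine bicartesian_of_surjective (fun t => by simp only [hπ₁, hπ₂]) ?_ ?_
    (fun b => ⟨⟨(one, b), h1b b⟩, rfl⟩) (fun b => ⟨⟨(one, b), h1b b⟩, hg1 b⟩)
  · rintro ⟨⟨y, x, b⟩, _⟩ ⟨⟨y', x', b'⟩, _⟩ h₁ h₂
    simp only [Subtype.ext_iff, hπ₁, hπ₂, Prod.mk.injEq] at h₁ h₂ ⊢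
    exact ⟨h₁.1, h₂⟩
  · rintro ⟨⟨y, c⟩, hp⟩ ⟨⟨x, b⟩, hq⟩ (rfl : c = g x b)
    exact ⟨⟨(y, x, b), hp, hq⟩, Subtype.ext (hπ₁ _), Subtype.ext (hπ₂ _)⟩

end LinkSquares

theorem biexact_of_link_general {X B : Type u} (mul : X → X → X) (one : X) (zero : B)
    (bar : X → X) (f : X → B → X → B → X) (g : X → B → B)
    (h11 : mul one one = one)
    (hiv' : ∀ x b, g (mul (bar x) x) b = b)
    (hstarstar : ∀ t ∈ linkC2 f g one zero,
      mul (bar t.1) (mul t.1 t.2.1) = t.2.1 ∧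
      mul (mul t.1 t.2.1) (bar t.2.1) = t.1 ∧
      mul t.2.1 (bar (mul t.1 t.2.1)) = bar t.1 ∧
      mul (bar (mul t.1 t.2.1)) t.1 = bar t.2.1)
    (hbar1 : bar one = one)
    (h1b : ∀ b, ((one, b) : X × B) ∈ linkC1 f one zero) :
    ∀ (hm : ∀ t ∈ linkC2 f g one zero, linkM mul t ∈ linkC1 f one zero)
      (hθc : ∀ t ∈ linkC2 f g one zero, linkθ mul bar t ∈ linkC2 f g one zero)
      (hφc : ∀ t ∈ linkC2 f g one zero, linkφ mul bar g t ∈ linkC2 f g one zero),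
      (∀ t : linkC2 f g one zero,
        (linkMS mul hm (linkφS mul bar hφc t) : X × B) =
          (t.1.1, g t.1.2.1 t.1.2.2)) ∧
      (∀ t : linkC2 f g one zero,
        (linkMS mul hm (linkθS mul bar hθc t) : X × B) =
          (t.1.2.1, t.1.2.2)) ∧
      Bicartesian (linkMS mul hm ∘ linkφS mul bar hφc)
        (linkMS mul hm ∘ linkθS mul bar hθc)
        (fun p => (p : X × B).2) (fun p => g (p : X × B).1 (p : X × B).2) ∧
      Bicartesian
        (linkP2 (linkMS mul hm ∘ linkφS mul bar hφc)
          (linkMS mul hm ∘ linkθS mul bar hθc))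
        (linkP1 (linkMS mul hm ∘ linkφS mul bar hφc)
          (linkMS mul hm ∘ linkθS mul bar hθc))
        (linkMS mul hm ∘ linkφS mul bar hφc)
        (linkMS mul hm ∘ linkθS mul bar hθc) := by
  intro hm hθc hφc
  have hg1 : ∀ b, g one b = b := fun b => by simpa only [hbar1, h11] using hiv' one b
  have hπ₁ := linkMS_linkφS_coe hm hφc (fun t ht => (hstarstar t ht).1)
    (fun t ht => (hstarstar t ht).2.1)
  have hπ₂ := linkMS_linkθS_coe hm hθc (fun t ht => (hstarstar t ht).1)
  exact ⟨hπ₁, hπ₂, bicartesian_linkC2 h1b hg1 hπ₁ hπ₂,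
    bicartesian_linkC3 (surjective_of_coe_eq_left h1b hg1 hπ₁)
      (surjective_of_coe_eq_right h1b hπ₂)⟩

/-- **Proposition 4** (first part). Assuming (⋆), (⋆⋆), `1̄ = 1` and
`(1, b) ∈ C₁` for every `b`, the pair `(m∘φ, m∘θ)` is bi-exact:
`m∘φ(y,x,b) = (y, g(x,b))` and `m∘θ(y,x,b) = (x,b)`, the square with
`d(x,b) = b` and `c(x,b) = g(x,b)` is bicartesian, and so is the square
given by the set-theoretic pullback `C₃` with its two projections. -/
theorem biexact_of_link {X B : Type u} (mul : X → X → X) (one : X) (zero : B)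
    (bar : X → X) (f : X → B → X → B → X) (g : X → B → B)
    (hf : ∀ y x b y' x' b', f (mul y x) b (mul y' x') b' =
      mul (f y (g x b) y' (g x' b')) (f x b x' b'))
    (hg : ∀ y x b, g (mul y x) b = g y (g x b))
    (hg10 : g one zero = zero) (h11 : mul one one = one)
    (hiv : ∀ x y b, g (mul (bar x) (mul (bar y) (mul y x))) b = b)
    (hiv' : ∀ x b, g (mul (bar x) x) b = b)
    (hstar : ∀ x b, ((x, b) : X × B) ∈ linkC1 f one zero →
      ((bar x, g x b) : X × B) ∈ linkC1 f one zero ∧ bar (bar x) = x)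
    (hstarstar : ∀ t ∈ linkC2 f g one zero,
      mul (bar t.1) (mul t.1 t.2.1) = t.2.1 ∧
      mul (mul t.1 t.2.1) (bar t.2.1) = t.1 ∧
      mul t.2.1 (bar (mul t.1 t.2.1)) = bar t.1 ∧
      mul (bar (mul t.1 t.2.1)) t.1 = bar t.2.1)
    (hbar1 : bar one = one)
    (h1b : ∀ b, ((one, b) : X × B) ∈ linkC1 f one zero) :
    ∀ (hm : ∀ t ∈ linkC2 f g one zero, linkM mul t ∈ linkC1 f one zero)
      (hθc : ∀ t ∈ linkC2 f g one zero, linkθ mul bar t ∈ linkC2 f g one zero)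
      (hφc : ∀ t ∈ linkC2 f g one zero, linkφ mul bar g t ∈ linkC2 f g one zero),
      (∀ t : linkC2 f g one zero,
        (linkMS mul hm (linkφS mul bar hφc t) : X × B) =
          (t.1.1, g t.1.2.1 t.1.2.2)) ∧
      (∀ t : linkC2 f g one zero,
        (linkMS mul hm (linkθS mul bar hθc t) : X × B) =
          (t.1.2.1, t.1.2.2)) ∧
      Bicartesian (linkMS mul hm ∘ linkφS mul bar hφc)
        (linkMS mul hm ∘ linkθS mul bar hθc)
        (fun p => (p : X × B).2) (fun p => g (p : X × B).1 (p : X × B).2) ∧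
      Bicartesian
        (linkP2 (linkMS mul hm ∘ linkφS mul bar hφc)
          (linkMS mul hm ∘ linkθS mul bar hθc))
        (linkP1 (linkMS mul hm ∘ linkφS mul bar hφc)
          (linkMS mul hm ∘ linkθS mul bar hθc))
        (linkMS mul hm ∘ linkφS mul bar hφc)
        (linkMS mul hm ∘ linkθS mul bar hθc) :=
  biexact_of_link_general mul one zero bar f g h11 hiv' hstarstar hbar1 h1b
end

section
/- Assume conditions (⋆) and (⋆⋆) of Proposition 3 and that 1̄ = 1. If (1, b) ∈ C₁ for all b ∈ B, the pairs (m, m∘θ) and (m, m∘φ) are jointly monomorphic, and (X, ·, 1) is a monoid, then (θ, φ, m : C₂ → C₁) is a unital and associative involutive-2-link in the category of types; moreover, the underlying reflexive graph of the associated internal groupoid has object set B, morphism set C₁, domain d(x, b) = b, codomain c(x, b) = g(x, b) and identities e(b) = (1, b). -/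
/-!
By the first two identities of (⋆⋆), `m ∘ θ (y, x, b) = (x, b)` and
`m ∘ φ (y, x, b) = (y, g(x, b))`. So `C₂` is the set of composable pairs of the reflexive graph
`d, c : C₁ ⇉ B`, `d (x, b) = b`, `c (x, b) = g(x, b)`, `e b = (1, b)`, with `m ∘ φ` and `m ∘ θ`
as its two projections (`linkPair` is the pairing). The sections `e₁ = ⟨id, e ∘ d⟩` and
`e₂ = ⟨e ∘ c, id⟩` witness unitality, and joint monicity makes them the only ones. Both squares
required for associativity are pullbacks of split epimorphisms, hence also pushouts; the two
composites of a composable triple are again pairings, and associativity of `·` identifies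
their products.
-/

universe u

open CategoryTheory Limits

theorem CategoryTheory.IsPullback.isPushout_of_sections {C : Type*} [Category C]
    {P X Y Z : C} {fst : P ⟶ X} {snd : P ⟶ Y} {f : X ⟶ Z} {g : Y ⟶ Z}
    (h : IsPullback fst snd f g) {e : Z ⟶ X} {k : Z ⟶ Y}
    (he : e ≫ f = 𝟙 Z) (hk : k ≫ g = 𝟙 Z) : IsPushout fst snd f g := by
  let s₁ : X ⟶ P := h.lift (𝟙 X) (f ≫ k) (by simp [hk])
  let s₂ : Y ⟶ P := h.lift (g ≫ e) (𝟙 Y) (by simp [he])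
  have inl_eq (s : PushoutCocone fst snd) : s.inl = f ≫ k ≫ s.inr := by
    calc s.inl = s₁ ≫ fst ≫ s.inl := by simp [s₁]
      _ = s₁ ≫ snd ≫ s.inr := by rw [s.condition]
      _ = f ≫ k ≫ s.inr := by simp [s₁]
  refine IsPushout.of_isColimit (PushoutCocone.IsColimit.mk h.w (fun s => e ≫ s.inl)
    (fun s => ?_) (fun s => ?_) (fun s m hm _ => ?_))
  · rw [inl_eq s, ← Category.assoc e, he, Category.id_comp]
  · calc g ≫ e ≫ s.inl = s₂ ≫ fst ≫ s.inl := by simp [s₂]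
      _ = s₂ ≫ snd ≫ s.inr := by rw [s.condition]
      _ = s.inr := by simp [s₂]
  · rw [← hm, ← Category.assoc, he, Category.id_comp]

theorem Bicartesian.of_jointlyMono {P X Y Z : Type u} {fst : P → X} {snd : P → Y}
    {f : X → Z} {g : Y → Z} (comm : ∀ p, f (fst p) = g (snd p))
    (hmono : JointlyMono fst snd) (hex : ∀ x y, f x = g y → ∃ p, fst p = x ∧ snd p = y)
    {e : Z → X} {k : Z → Y} (he : Function.RightInverse e f)
    (hk : Function.RightInverse k g) : Bicartesian fst snd f g := by
  have hpb : IsPullback (TypeCat.ofHom fst) (TypeCat.ofHom snd) (TypeCat.ofHom f)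
      (TypeCat.ofHom g) :=
    (Types.isPullback_iff _ _ _ _).2
      ⟨by ext p; exact comm p, fun p p' h => hmono p p' h.1 h.2, hex⟩
  exact ⟨hpb, hpb.isPushout_of_sections (e := TypeCat.ofHom e) (k := TypeCat.ofHom k)
    (by ext z; exact he z) (by ext z; exact hk z)⟩

theorem JointlyMono.fixed_section_unique {C₂ C₁ : Type u} {m : C₂ → C₁} {φ : C₂ → C₂}
    (h : JointlyMono m (m ∘ φ)) {e e' : C₁ → C₂} (he : m ∘ e = id) (hφe : φ ∘ e = e)
    (he' : m ∘ e' = id) (hφe' : φ ∘ e' = e') : e = e' := by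
  funext p
  have hm : m (e p) = m (e' p) := (congrFun he p).trans (congrFun he' p).symm
  refine h _ _ hm ?_
  change m (φ (e p)) = m (φ (e' p))
  rw [show φ (e p) = e p from congrFun hφe p, show φ (e' p) = e' p from congrFun hφe' p, hm]

section LinkGroupoid

variable {X B : Type u} {one : X} {zero : B} {f : X → B → X → B → X}

def linkDom (p : linkC1 f one zero) : B := p.1.2

def linkCod (g : X → B → B) (p : linkC1 f one zero) : B := g p.1.1 p.1.2

def linkUnit (h1b : ∀ b, ((one, b) : X × B) ∈ linkC1 f one zero) (b : B) :
    linkC1 f one zero :=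
  ⟨(one, b), h1b b⟩

theorem linkDom_linkUnit (h1b : ∀ b, ((one, b) : X × B) ∈ linkC1 f one zero) :
    Function.RightInverse (linkUnit h1b) linkDom :=
  fun _ => rfl

theorem linkCod_linkUnit {g : X → B → B} (h1b : ∀ b, ((one, b) : X × B) ∈ linkC1 f one zero)
    (hg1 : ∀ b, g one b = b) : Function.RightInverse (linkUnit h1b) (linkCod g) :=
  hg1

variable {g : X → B → B}

def linkPair (a b : linkC1 f one zero) (h : linkDom a = linkCod g b) : linkC2 f g one zero :=
  ⟨(a.1.1, b.1.1, b.1.2), by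
    refine ⟨?_, b.2⟩
    change (a.1.1, linkCod g b) ∈ linkC1 f one zero
    rw [← h]
    exact a.2⟩

variable {mul : X → X → X} {bar : X → X}
  (hm : ∀ t ∈ linkC2 f g one zero, linkM mul t ∈ linkC1 f one zero)
  (hθc : ∀ t ∈ linkC2 f g one zero, linkθ mul bar t ∈ linkC2 f g one zero)
  (hφc : ∀ t ∈ linkC2 f g one zero, linkφ mul bar g t ∈ linkC2 f g one zero)

theorem linkMS_linkθS (hl : ∀ t ∈ linkC2 f g one zero, mul (bar t.1) (mul t.1 t.2.1) = t.2.1)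
    (t : linkC2 f g one zero) :
    linkMS mul hm (linkθS mul bar hθc t) = ⟨(t.1.2.1, t.1.2.2), t.2.2⟩ :=
  Subtype.ext (Prod.ext (hl t.1 t.2) rfl)

theorem linkMS_linkφS (hl : ∀ t ∈ linkC2 f g one zero, mul (bar t.1) (mul t.1 t.2.1) = t.2.1)
    (hr : ∀ t ∈ linkC2 f g one zero, mul (mul t.1 t.2.1) (bar t.2.1) = t.1)
    (t : linkC2 f g one zero) :
    linkMS mul hm (linkφS mul bar hφc t) = ⟨(t.1.1, g t.1.2.1 t.1.2.2), t.2.1⟩ := by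
  refine Subtype.ext (Prod.ext (hr t.1 t.2) ?_)
  change g (mul (bar t.1.1) (mul t.1.1 t.1.2.1)) t.1.2.2 = g t.1.2.1 t.1.2.2
  rw [hl t.1 t.2]

theorem linkMS_linkφS_linkPair
    (hl : ∀ t ∈ linkC2 f g one zero, mul (bar t.1) (mul t.1 t.2.1) = t.2.1)
    (hr : ∀ t ∈ linkC2 f g one zero, mul (mul t.1 t.2.1) (bar t.2.1) = t.1)
    (a b : linkC1 f one zero) (h : linkDom a = linkCod g b) :
    linkMS mul hm (linkφS mul bar hφc (linkPair a b h)) = a := by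
  rw [linkMS_linkφS hm hφc hl hr]
  exact Subtype.ext (Prod.ext rfl h.symm)

theorem linkMS_linkθS_linkPair
    (hl : ∀ t ∈ linkC2 f g one zero, mul (bar t.1) (mul t.1 t.2.1) = t.2.1)
    (a b : linkC1 f one zero) (h : linkDom a = linkCod g b) :
    linkMS mul hm (linkθS mul bar hθc (linkPair a b h)) = b :=
  linkMS_linkθS hm hθc hl _

theorem linkDom_linkMS_linkφS (t : linkC2 f g one zero) :
    linkDom (linkMS mul hm (linkφS mul bar hφc t)) =
      linkCod g (linkMS mul hm (linkθS mul bar hθc t)) :=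
  rfl

theorem linkDom_linkMS (t : linkC2 f g one zero) :
    linkDom (linkMS mul hm t) = linkDom (linkMS mul hm (linkθS mul bar hθc t)) :=
  rfl

theorem linkCod_linkMS (hg : ∀ y x b, g (mul y x) b = g y (g x b))
    (hl : ∀ t ∈ linkC2 f g one zero, mul (bar t.1) (mul t.1 t.2.1) = t.2.1)
    (hr : ∀ t ∈ linkC2 f g one zero, mul (mul t.1 t.2.1) (bar t.2.1) = t.1)
    (t : linkC2 f g one zero) :
    linkCod g (linkMS mul hm t) = linkCod g (linkMS mul hm (linkφS mul bar hφc t)) := by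
  rw [linkMS_linkφS hm hφc hl hr]
  exact hg _ _ _

theorem jointlyMono_linkMS_linkφS_linkθS
    (hl : ∀ t ∈ linkC2 f g one zero, mul (bar t.1) (mul t.1 t.2.1) = t.2.1)
    (hr : ∀ t ∈ linkC2 f g one zero, mul (mul t.1 t.2.1) (bar t.2.1) = t.1) :
    JointlyMono (linkMS mul hm ∘ linkφS mul bar hφc) (linkMS mul hm ∘ linkθS mul bar hθc) := by
  intro t t' hφ hθ
  simp only [Function.comp_apply, linkMS_linkφS hm hφc hl hr, linkMS_linkθS hm hθc hl,
    Subtype.mk.injEq, Prod.mk.injEq] at hφ hθ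
  exact Subtype.ext (Prod.ext hφ.1 (Prod.ext hθ.1 hθ.2))

def linkE₁ (h1b : ∀ b, ((one, b) : X × B) ∈ linkC1 f one zero) (hg1 : ∀ b, g one b = b)
    (p : linkC1 f one zero) : linkC2 f g one zero :=
  linkPair p (linkUnit h1b (linkDom p)) (hg1 _).symm

def linkE₂ (h1b : ∀ b, ((one, b) : X × B) ∈ linkC1 f one zero) (p : linkC1 f one zero) :
    linkC2 f g one zero :=
  linkPair (linkUnit h1b (linkCod g p)) p rfl

theorem linkMS_linkE₁ (h1b : ∀ b, ((one, b) : X × B) ∈ linkC1 f one zero)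
    (hg1 : ∀ b, g one b = b) (hone_right : ∀ x, mul x one = x) (p : linkC1 f one zero) :
    linkMS mul hm (linkE₁ h1b hg1 p) = p :=
  Subtype.ext (Prod.ext (hone_right _) rfl)

theorem linkMS_linkE₂ (h1b : ∀ b, ((one, b) : X × B) ∈ linkC1 f one zero)
    (hone_left : ∀ x, mul one x = x) (p : linkC1 f one zero) :
    linkMS mul hm (linkE₂ h1b p) = p :=
  Subtype.ext (Prod.ext (hone_left _) rfl)

theorem linkθS_linkE₂ (h1b : ∀ b, ((one, b) : X × B) ∈ linkC1 f one zero)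
    (hbar1 : bar one = one) (hone_left : ∀ x, mul one x = x) (p : linkC1 f one zero) :
    linkθS mul bar hθc (linkE₂ h1b p) = linkE₂ h1b p :=
  Subtype.ext (Prod.ext hbar1 (Prod.ext (hone_left _) rfl))

theorem linkφS_linkE₁ (h1b : ∀ b, ((one, b) : X × B) ∈ linkC1 f one zero)
    (hg1 : ∀ b, g one b = b)
    (hl : ∀ t ∈ linkC2 f g one zero, mul (bar t.1) (mul t.1 t.2.1) = t.2.1)
    (hbar1 : bar one = one) (hone_right : ∀ x, mul x one = x) (p : linkC1 f one zero) :
    linkφS mul bar hφc (linkE₁ h1b hg1 p) = linkE₁ h1b hg1 p := by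
  refine Subtype.ext (Prod.ext (hone_right _) (Prod.ext hbar1 ?_))
  change g (mul (bar p.1.1) (mul p.1.1 one)) p.1.2 = p.1.2
  rw [show mul (bar p.1.1) (mul p.1.1 one) = one from hl _ (linkE₁ h1b hg1 p).2, hg1]

theorem linkMS_linkφS_linkE₁ (h1b : ∀ b, ((one, b) : X × B) ∈ linkC1 f one zero)
    (hg1 : ∀ b, g one b = b)
    (hl : ∀ t ∈ linkC2 f g one zero, mul (bar t.1) (mul t.1 t.2.1) = t.2.1)
    (hr : ∀ t ∈ linkC2 f g one zero, mul (mul t.1 t.2.1) (bar t.2.1) = t.1)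
    (p : linkC1 f one zero) : linkMS mul hm (linkφS mul bar hφc (linkE₁ h1b hg1 p)) = p :=
  linkMS_linkφS_linkPair hm hφc hl hr _ _ _

theorem linkMS_linkθS_linkE₁ (h1b : ∀ b, ((one, b) : X × B) ∈ linkC1 f one zero)
    (hg1 : ∀ b, g one b = b)
    (hl : ∀ t ∈ linkC2 f g one zero, mul (bar t.1) (mul t.1 t.2.1) = t.2.1)
    (p : linkC1 f one zero) :
    linkMS mul hm (linkθS mul bar hθc (linkE₁ h1b hg1 p)) = linkUnit h1b (linkDom p) :=
  linkMS_linkθS_linkPair hm hθc hl _ _ _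

theorem linkMS_linkφS_linkE₂ (h1b : ∀ b, ((one, b) : X × B) ∈ linkC1 f one zero)
    (hl : ∀ t ∈ linkC2 f g one zero, mul (bar t.1) (mul t.1 t.2.1) = t.2.1)
    (hr : ∀ t ∈ linkC2 f g one zero, mul (mul t.1 t.2.1) (bar t.2.1) = t.1)
    (p : linkC1 f one zero) :
    linkMS mul hm (linkφS mul bar hφc (linkE₂ h1b p)) = linkUnit h1b (linkCod g p) :=
  linkMS_linkφS_linkPair hm hφc hl hr _ _ _

theorem linkMS_linkθS_linkE₂ (h1b : ∀ b, ((one, b) : X × B) ∈ linkC1 f one zero)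
    (hl : ∀ t ∈ linkC2 f g one zero, mul (bar t.1) (mul t.1 t.2.1) = t.2.1)
    (p : linkC1 f one zero) : linkMS mul hm (linkθS mul bar hθc (linkE₂ h1b p)) = p :=
  linkMS_linkθS_linkPair hm hθc hl _ _ _

theorem isUnitalLink_linkθS_linkφS_linkMS (h1b : ∀ b, ((one, b) : X × B) ∈ linkC1 f one zero)
    (hg : ∀ y x b, g (mul y x) b = g y (g x b)) (hg1 : ∀ b, g one b = b)
    (hl : ∀ t ∈ linkC2 f g one zero, mul (bar t.1) (mul t.1 t.2.1) = t.2.1)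
    (hr : ∀ t ∈ linkC2 f g one zero, mul (mul t.1 t.2.1) (bar t.2.1) = t.1)
    (hbar1 : bar one = one) (hone_left : ∀ x, mul one x = x)
    (hone_right : ∀ x, mul x one = x)
    (hmθ : JointlyMono (linkMS mul hm) (linkMS mul hm ∘ linkθS mul bar hθc))
    (hmφ : JointlyMono (linkMS mul hm) (linkMS mul hm ∘ linkφS mul bar hφc)) :
    IsUnitalLink (linkθS mul bar hθc) (linkφS mul bar hφc) (linkMS mul hm) := by
  refine ⟨hmθ, hmφ, linkE₁ h1b hg1, linkE₂ h1b, funext (linkMS_linkE₁ hm h1b hg1 hone_right),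
    funext (linkMS_linkE₂ hm h1b hone_left), funext (linkθS_linkE₂ hθc h1b hbar1 hone_left),
    funext (linkφS_linkE₁ hφc h1b hg1 hl hbar1 hone_right), funext fun p => ?_,
    funext fun t => ?_, funext fun t => ?_, funext fun t => ?_⟩
  · simp only [Function.comp_apply, linkMS_linkθS hm hθc hl, linkMS_linkφS hm hφc hl hr]
    refine Subtype.ext (Prod.ext rfl ?_)
    change g (mul (bar one) (mul one p.1.1)) p.1.2 = g (mul p.1.1 one) p.1.2
    rw [hbar1, hone_left, hone_left, hone_right]
  · simp only [Function.comp_apply, linkMS_linkθS_linkE₁ hm hθc h1b hg1 hl,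
      linkMS_linkφS_linkE₂ hm hφc h1b hl hr, linkDom_linkMS_linkφS hm hθc hφc]
  · simp only [Function.comp_apply, linkMS_linkθS_linkE₁ hm hθc h1b hg1 hl]
    rw [linkDom_linkMS hm hθc t]
  · simp only [Function.comp_apply, linkMS_linkφS_linkE₂ hm hφc h1b hl hr]
    rw [linkCod_linkMS hm hφc hg hl hr t]

theorem bicartesian_linkDom_linkCod (h1b : ∀ b, ((one, b) : X × B) ∈ linkC1 f one zero)
    (hg1 : ∀ b, g one b = b)
    (hl : ∀ t ∈ linkC2 f g one zero, mul (bar t.1) (mul t.1 t.2.1) = t.2.1)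
    (hr : ∀ t ∈ linkC2 f g one zero, mul (mul t.1 t.2.1) (bar t.2.1) = t.1) :
    Bicartesian (linkMS mul hm ∘ linkφS mul bar hφc) (linkMS mul hm ∘ linkθS mul bar hθc)
      linkDom (linkCod g) :=
  Bicartesian.of_jointlyMono (linkDom_linkMS_linkφS hm hθc hφc)
    (jointlyMono_linkMS_linkφS_linkθS hm hθc hφc hl hr)
    (fun a b h => ⟨linkPair a b h, linkMS_linkφS_linkPair hm hφc hl hr a b h,
      linkMS_linkθS_linkPair hm hθc hl a b h⟩)
    (linkDom_linkUnit h1b) (linkCod_linkUnit h1b hg1)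

theorem linkDom_linkMS_eq_linkCod_linkMS_linkθS {s t : linkC2 f g one zero}
    (hst : linkMS mul hm (linkφS mul bar hφc t) = linkMS mul hm (linkθS mul bar hθc s)) :
    linkDom (linkMS mul hm s) = linkCod g (linkMS mul hm (linkθS mul bar hθc t)) :=
  calc linkDom (linkMS mul hm s)
      = linkDom (linkMS mul hm (linkθS mul bar hθc s)) := linkDom_linkMS hm hθc s
    _ = linkDom (linkMS mul hm (linkφS mul bar hφc t)) := congrArg linkDom hst.symm
    _ = _ := linkDom_linkMS_linkφS hm hθc hφc t

theorem linkDom_linkMS_linkφS_eq_linkCod_linkMS (hg : ∀ y x b, g (mul y x) b = g y (g x b))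
    (hl : ∀ t ∈ linkC2 f g one zero, mul (bar t.1) (mul t.1 t.2.1) = t.2.1)
    (hr : ∀ t ∈ linkC2 f g one zero, mul (mul t.1 t.2.1) (bar t.2.1) = t.1)
    {s t : linkC2 f g one zero}
    (hst : linkMS mul hm (linkφS mul bar hφc t) = linkMS mul hm (linkθS mul bar hθc s)) :
    linkDom (linkMS mul hm (linkφS mul bar hφc s)) = linkCod g (linkMS mul hm t) :=
  calc linkDom (linkMS mul hm (linkφS mul bar hφc s))
      = linkCod g (linkMS mul hm (linkθS mul bar hθc s)) := linkDom_linkMS_linkφS hm hθc hφc s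
    _ = linkCod g (linkMS mul hm (linkφS mul bar hφc t)) := congrArg (linkCod g) hst.symm
    _ = _ := (linkCod_linkMS hm hφc hg hl hr t).symm

theorem linkMS_linkPair_assoc
    (hl : ∀ t ∈ linkC2 f g one zero, mul (bar t.1) (mul t.1 t.2.1) = t.2.1)
    (hr : ∀ t ∈ linkC2 f g one zero, mul (mul t.1 t.2.1) (bar t.2.1) = t.1)
    (hassoc : ∀ a b c, mul (mul a b) c = mul a (mul b c)) {s t : linkC2 f g one zero}
    (hst : linkMS mul hm (linkφS mul bar hφc t) = linkMS mul hm (linkθS mul bar hθc s))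
    (h₁ : linkDom (linkMS mul hm s) = linkCod g (linkMS mul hm (linkθS mul bar hθc t)))
    (h₂ : linkDom (linkMS mul hm (linkφS mul bar hφc s)) = linkCod g (linkMS mul hm t)) :
    linkMS mul hm (linkPair _ _ h₁) = linkMS mul hm (linkPair _ _ h₂) := by
  have hx : t.1.1 = s.1.2.1 := by
    simpa only [linkMS_linkφS hm hφc hl hr, linkMS_linkθS hm hθc hl] using
      congrArg (fun p : linkC1 f one zero => p.1.1) hst
  refine Subtype.ext ?_
  change (mul (mul s.1.1 s.1.2.1) (mul (bar t.1.1) (mul t.1.1 t.1.2.1)), t.1.2.2) =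
    (mul (mul (mul s.1.1 s.1.2.1) (bar s.1.2.1)) (mul t.1.1 t.1.2.1), t.1.2.2)
  rw [hl t.1 t.2, hr s.1 s.2, hx, hassoc]

theorem isAssociativeLink_linkθS_linkφS_linkMS
    (h1b : ∀ b, ((one, b) : X × B) ∈ linkC1 f one zero)
    (hg : ∀ y x b, g (mul y x) b = g y (g x b)) (hg1 : ∀ b, g one b = b)
    (hl : ∀ t ∈ linkC2 f g one zero, mul (bar t.1) (mul t.1 t.2.1) = t.2.1)
    (hr : ∀ t ∈ linkC2 f g one zero, mul (mul t.1 t.2.1) (bar t.2.1) = t.1)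
    (hassoc : ∀ a b c, mul (mul a b) c = mul a (mul b c)) :
    IsAssociativeLink (linkθS mul bar hθc) (linkφS mul bar hφc) (linkMS mul hm) := by
  let C₃ := linkC3 (linkMS mul hm ∘ linkφS mul bar hφc) (linkMS mul hm ∘ linkθS mul bar hθc)
  have h₁ (q : C₃) := linkDom_linkMS_eq_linkCod_linkMS_linkθS hm hθc hφc q.2
  have h₂ (q : C₃) := linkDom_linkMS_linkφS_eq_linkCod_linkMS hm hθc hφc hg hl hr q.2
  have hC₃ : Bicartesian (linkP2 _ _ : C₃ → _) (linkP1 _ _) (linkMS mul hm ∘ linkφS mul bar hφc)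
      (linkMS mul hm ∘ linkθS mul bar hθc) :=
    Bicartesian.of_jointlyMono (fun q => q.2)
      (fun q q' h₂ h₁ => Subtype.ext (Prod.ext h₁ h₂)) (fun t s h => ⟨⟨(s, t), h⟩, rfl, rfl⟩)
      (linkMS_linkφS_linkE₁ hm hφc h1b hg1 hl hr) (linkMS_linkθS_linkE₂ hm hθc h1b hl)
  exact ⟨B, linkDom, linkCod g, C₃, linkP1 _ _, linkP2 _ _,
    bicartesian_linkDom_linkCod hm hθc hφc h1b hg1 hl hr, hC₃,
    fun q => linkPair _ _ (h₁ q), fun q => linkPair _ _ (h₂ q),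
    funext fun q => linkMS_linkφS_linkPair hm hφc hl hr _ _ _,
    funext fun q => linkMS_linkθS_linkPair hm hθc hl _ _ _,
    funext fun q => linkMS_linkφS_linkPair hm hφc hl hr _ _ _,
    funext fun q => linkMS_linkθS_linkPair hm hθc hl _ _ _,
    funext fun q => linkMS_linkPair_assoc hm hθc hφc hl hr hassoc q.2 _ _⟩

end LinkGroupoid

theorem link_unital_associative_and_reflexive_graph_general {X B : Type u}
    (mul : X → X → X) (one : X) (zero : B) (bar : X → X)
    (f : X → B → X → B → X) (g : X → B → B)
    (hg : ∀ y x b, g (mul y x) b = g y (g x b))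
    (hiv' : ∀ x b, g (mul (bar x) x) b = b)
    (hstarstar : ∀ t ∈ linkC2 f g one zero,
      mul (bar t.1) (mul t.1 t.2.1) = t.2.1 ∧
      mul (mul t.1 t.2.1) (bar t.2.1) = t.1 ∧
      mul t.2.1 (bar (mul t.1 t.2.1)) = bar t.1 ∧
      mul (bar (mul t.1 t.2.1)) t.1 = bar t.2.1)
    (hbar1 : bar one = one)
    (h1b : ∀ b, ((one, b) : X × B) ∈ linkC1 f one zero)
    (hone : ∀ x : X, mul one x = x ∧ mul x one = x)
    (hassoc : ∀ a b c : X, mul (mul a b) c = mul a (mul b c)) :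
    ∀ (hm : ∀ t ∈ linkC2 f g one zero, linkM mul t ∈ linkC1 f one zero)
      (hθc : ∀ t ∈ linkC2 f g one zero, linkθ mul bar t ∈ linkC2 f g one zero)
      (hφc : ∀ t ∈ linkC2 f g one zero, linkφ mul bar g t ∈ linkC2 f g one zero),
      JointlyMono (linkMS mul hm) (linkMS mul hm ∘ linkθS mul bar hθc) →
      JointlyMono (linkMS mul hm) (linkMS mul hm ∘ linkφS mul bar hφc) →
      IsUnitalLink (linkθS mul bar hθc) (linkφS mul bar hφc) (linkMS mul hm) ∧
      IsAssociativeLink (linkθS mul bar hθc) (linkφS mul bar hφc)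
        (linkMS mul hm) ∧
      -- the underlying reflexive graph: d(x, b) = b, c = g, e(b) = (1, b)
      ((fun p : linkC1 f one zero => (p : X × B).2) ∘
        (fun b : B => (⟨(one, b), h1b b⟩ : linkC1 f one zero)) = id) ∧
      ((fun p : linkC1 f one zero => g (p : X × B).1 (p : X × B).2) ∘
        (fun b : B => (⟨(one, b), h1b b⟩ : linkC1 f one zero)) = id) ∧
      Bicartesian (linkMS mul hm ∘ linkφS mul bar hφc)
        (linkMS mul hm ∘ linkθS mul bar hθc)
        (fun p => (p : X × B).2) (fun p => g (p : X × B).1 (p : X × B).2) ∧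
      -- `e` is determined by `e ∘ d = m ∘ θ ∘ e₁` and `e ∘ c = m ∘ φ ∘ e₂`,
      -- where `e₁, e₂` are the unique sections provided by unitality
      (∀ e₁ e₂ : linkC1 f one zero → linkC2 f g one zero,
        linkMS mul hm ∘ e₁ = id → linkMS mul hm ∘ e₂ = id →
        linkθS mul bar hθc ∘ e₂ = e₂ → linkφS mul bar hφc ∘ e₁ = e₁ →
        ((fun b : B => (⟨(one, b), h1b b⟩ : linkC1 f one zero)) ∘
            (fun p : linkC1 f one zero => (p : X × B).2) =
          linkMS mul hm ∘ linkθS mul bar hθc ∘ e₁ ∧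
         (fun b : B => (⟨(one, b), h1b b⟩ : linkC1 f one zero)) ∘
            (fun p : linkC1 f one zero => g (p : X × B).1 (p : X × B).2) =
          linkMS mul hm ∘ linkφS mul bar hφc ∘ e₂)) := by
  intro hm hθc hφc hmθ hmφ
  have hl t ht := (hstarstar t ht).1
  have hr t ht := (hstarstar t ht).2.1
  have hone_left x := (hone x).1
  have hone_right x := (hone x).2
  have hg1 (b : B) : g one b = b := by simpa only [hbar1, hone_left] using hiv' one b
  refine ⟨isUnitalLink_linkθS_linkφS_linkMS hm hθc hφc h1b hg hg1 hl hr hbar1 hone_left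
      hone_right hmθ hmφ,
    isAssociativeLink_linkθS_linkφS_linkMS hm hθc hφc h1b hg hg1 hl hr hassoc, rfl, funext hg1,
    bicartesian_linkDom_linkCod hm hθc hφc h1b hg1 hl hr, fun e₁ e₂ he₁ he₂ hθe₂ hφe₁ => ?_⟩
  obtain rfl := hmφ.fixed_section_unique he₁ hφe₁ (funext (linkMS_linkE₁ hm h1b hg1 hone_right))
    (funext (linkφS_linkE₁ hφc h1b hg1 hl hbar1 hone_right))
  obtain rfl := hmθ.fixed_section_unique he₂ hθe₂ (funext (linkMS_linkE₂ hm h1b hone_left))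
    (funext (linkθS_linkE₂ hθc h1b hbar1 hone_left))
  exact ⟨funext fun p => (linkMS_linkθS_linkE₁ hm hθc h1b hg1 hl p).symm,
    funext fun p => (linkMS_linkφS_linkE₂ hm hφc h1b hl hr p).symm⟩

/-- **Proposition 6.** Assuming (⋆), (⋆⋆), `1̄ = 1`, `(1, b) ∈ C₁` for all
`b`, that the pairs `(m, m∘θ)` and `(m, m∘φ)` are jointly monomorphic, and
that `(X, ·, 1)` is a monoid, then `(θ, φ, m : C₂ → C₁)` is a unital and
associative involutive-2-link in the category of types; moreover the
underlying reflexive graph of the associated internal groupoid is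
`C₁ ⇉ B` with `d(x, b) = b`, `c = g` and `e(b) = (1, b)`. -/
theorem link_unital_associative_and_reflexive_graph {X B : Type u}
    (mul : X → X → X) (one : X) (zero : B) (bar : X → X)
    (f : X → B → X → B → X) (g : X → B → B)
    (hf : ∀ y x b y' x' b', f (mul y x) b (mul y' x') b' =
      mul (f y (g x b) y' (g x' b')) (f x b x' b'))
    (hg : ∀ y x b, g (mul y x) b = g y (g x b))
    (hg10 : g one zero = zero) (h11 : mul one one = one)
    (hiv : ∀ x y b, g (mul (bar x) (mul (bar y) (mul y x))) b = b)
    (hiv' : ∀ x b, g (mul (bar x) x) b = b)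
    (hstar : ∀ x b, ((x, b) : X × B) ∈ linkC1 f one zero →
      ((bar x, g x b) : X × B) ∈ linkC1 f one zero ∧ bar (bar x) = x)
    (hstarstar : ∀ t ∈ linkC2 f g one zero,
      mul (bar t.1) (mul t.1 t.2.1) = t.2.1 ∧
      mul (mul t.1 t.2.1) (bar t.2.1) = t.1 ∧
      mul t.2.1 (bar (mul t.1 t.2.1)) = bar t.1 ∧
      mul (bar (mul t.1 t.2.1)) t.1 = bar t.2.1)
    (hbar1 : bar one = one)
    (h1b : ∀ b, ((one, b) : X × B) ∈ linkC1 f one zero)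
    (hone : ∀ x : X, mul one x = x ∧ mul x one = x)
    (hassoc : ∀ a b c : X, mul (mul a b) c = mul a (mul b c)) :
    ∀ (hm : ∀ t ∈ linkC2 f g one zero, linkM mul t ∈ linkC1 f one zero)
      (hθc : ∀ t ∈ linkC2 f g one zero, linkθ mul bar t ∈ linkC2 f g one zero)
      (hφc : ∀ t ∈ linkC2 f g one zero, linkφ mul bar g t ∈ linkC2 f g one zero),
      JointlyMono (linkMS mul hm) (linkMS mul hm ∘ linkθS mul bar hθc) →
      JointlyMono (linkMS mul hm) (linkMS mul hm ∘ linkφS mul bar hφc) →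
      IsUnitalLink (linkθS mul bar hθc) (linkφS mul bar hφc) (linkMS mul hm) ∧
      IsAssociativeLink (linkθS mul bar hθc) (linkφS mul bar hφc)
        (linkMS mul hm) ∧
      -- the underlying reflexive graph: d(x, b) = b, c = g, e(b) = (1, b)
      ((fun p : linkC1 f one zero => (p : X × B).2) ∘
        (fun b : B => (⟨(one, b), h1b b⟩ : linkC1 f one zero)) = id) ∧
      ((fun p : linkC1 f one zero => g (p : X × B).1 (p : X × B).2) ∘
        (fun b : B => (⟨(one, b), h1b b⟩ : linkC1 f one zero)) = id) ∧
      Bicartesian (linkMS mul hm ∘ linkφS mul bar hφc)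
        (linkMS mul hm ∘ linkθS mul bar hθc)
        (fun p => (p : X × B).2) (fun p => g (p : X × B).1 (p : X × B).2) ∧
      -- `e` is determined by `e ∘ d = m ∘ θ ∘ e₁` and `e ∘ c = m ∘ φ ∘ e₂`,
      -- where `e₁, e₂` are the unique sections provided by unitality
      (∀ e₁ e₂ : linkC1 f one zero → linkC2 f g one zero,
        linkMS mul hm ∘ e₁ = id → linkMS mul hm ∘ e₂ = id →
        linkθS mul bar hθc ∘ e₂ = e₂ → linkφS mul bar hφc ∘ e₁ = e₁ →
        ((fun b : B => (⟨(one, b), h1b b⟩ : linkC1 f one zero)) ∘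
            (fun p : linkC1 f one zero => (p : X × B).2) =
          linkMS mul hm ∘ linkθS mul bar hθc ∘ e₁ ∧
         (fun b : B => (⟨(one, b), h1b b⟩ : linkC1 f one zero)) ∘
            (fun p : linkC1 f one zero => g (p : X × B).1 (p : X × B).2) =
          linkMS mul hm ∘ linkφS mul bar hφc ∘ e₂)) :=
  link_unital_associative_and_reflexive_graph_general mul one zero bar f g hg hiv' hstarstar hbar1
    h1b hone hassoc
end
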